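/- For every integer r ≥ 1, |Var(μ^(r+1)) − Var(μ^(r))| ≤ b. -/

import Mathlib

/-!
Write `r = b * q + c` with `c < b` and split `n = b * m + ε` by its last digit. Adding `r` puts
`(ε + c) mod b` in the last place and carries into `m + q` exactly when `ε + c ≥ b`, so
`μ^(bq+c)` is the mixture `(b - c)/b · μ^(q)(· - c) + c/b · μ^(q+1)(· - (c - b))`.
Taking moments, induction on `r` shows that every `μ^(r)` has mass `1` and mean `0`, and then
`V(bq+c) = ((b - c) V(q) + c V(q+1))/b + c (b - c)`. Hence `D(r) = V(r+1) - V(r)` satisfies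
`D(bq+c) = D(q)/b + (b - 2c - 1)`, and `|D(r)| ≤ b` follows by strong induction because
`|b - 2c - 1| ≤ b - 1`.
-/

open Filter Topology MeasureTheory

noncomputable section

def digitSum (b n : ℕ) : ℕ := (Nat.digits b n).sum

/-- `Δ^(r)(n) = s(n+r) - s(n)`, the variation of the base-`b` digit sum when adding `r`. -/
def delta (b r n : ℕ) : ℤ := (digitSum b (n + r) : ℤ) - (digitSum b n : ℤ)

open Finset

theorem sum_range_mul_eq_sum_sum {M : Type*} [AddCommMonoid M] (f : ℕ → M) (b N : ℕ) :
    ∑ n ∈ range (b * N), f n = ∑ m ∈ range N, ∑ ε ∈ range b, f (b * m + ε) := by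
  induction N with
  | zero => simp
  | succ N ih => rw [Nat.mul_succ, sum_range_add, ih, sum_range_succ]

theorem digitSum_base_mul_add {b : ℕ} (hb : 1 < b) (m : ℕ) {ε : ℕ} (hε : ε < b) :
    digitSum b (b * m + ε) = ε + digitSum b m := by
  rcases eq_or_ne ε 0 with rfl | hε₀
  · rcases eq_or_ne m 0 with rfl | hm
    · simp [digitSum]
    · rw [digitSum, add_zero, ← zero_add (b * m), Nat.digits_add b hb 0 m (by omega) (.inr hm)]
      simp [digitSum]
  · rw [digitSum, add_comm, Nat.digits_add b hb ε m hε (.inl hε₀), List.sum_cons, digitSum]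

section Delta

variable {b q c m ε : ℕ}

theorem delta_base_mul_add_of_add_lt (hb : 1 < b) (h : ε + c < b) :
    delta b (b * q + c) (b * m + ε) = delta b q m + c := by
  have : b * m + ε + (b * q + c) = b * (m + q) + (ε + c) := by ring
  rw [delta, this, digitSum_base_mul_add hb _ h, digitSum_base_mul_add hb _ (by omega), delta]
  push_cast
  ring

theorem delta_base_mul_add_of_le_add (hb : 1 < b) (hε : ε < b) (hc : c < b) (h : b ≤ ε + c) :
    delta b (b * q + c) (b * m + ε) = delta b (q + 1) m + (c - b : ℤ) := by
  have : b * m + ε + (b * q + c) = b * (m + (q + 1)) + (ε + c - b) := by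
    rw [Nat.mul_add b m, Nat.mul_succ]; omega
  rw [delta, this, digitSum_base_mul_add hb _ (by omega), digitSum_base_mul_add hb _ hε, delta]
  omega

def deltaCount (b r : ℕ) (d : ℤ) (N : ℕ) : ℕ :=
  ((Finset.range N).filter fun n => delta b r n = d).card

theorem deltaCount_base_mul (hb : 1 < b) (hc : c < b) (d : ℤ) (M : ℕ) :
    deltaCount b (b * q + c) d (b * M) =
      (b - c) * deltaCount b q (d - c) M + c * deltaCount b (q + 1) (d - (c - b)) M := by
  simp only [deltaCount, card_filter]
  rw [sum_range_mul_eq_sum_sum, sum_comm, ← sum_range_add_sum_Ico _ (Nat.sub_le b c)]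
  congr 1
  · rw [sum_const_nat fun ε hε => sum_congr rfl fun m _ => ?_, card_range]
    rw [delta_base_mul_add_of_add_lt hb (by have := mem_range.1 hε; omega)]
    simp only [eq_sub_iff_add_eq]
  · rw [sum_const_nat fun ε hε => sum_congr rfl fun m _ => ?_, Nat.card_Ico, Nat.sub_sub_self hc.le]
    have hε := mem_Ico.1 hε
    rw [delta_base_mul_add_of_le_add hb hε.2 hc (by omega)]
    simp only [eq_sub_iff_add_eq]

end Delta

section Moments

variable {p : ℤ → ℝ} {m₀ m₁ m₂ : ℝ}

theorem summable_of_summable_sq_mul (hp : ∀ d, 0 ≤ p d)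
    (h : Summable fun d : ℤ => (d : ℝ) ^ 2 * p d) : Summable p :=
  h.of_norm_bounded_eventually <| (eventually_cofinite_ne 0).mono fun d hd => by
    have : (1 : ℝ) ≤ |(d : ℝ)| := by exact_mod_cast Int.one_le_abs hd
    rw [Real.norm_of_nonneg (hp d)]
    exact le_mul_of_one_le_left (hp d) (by nlinarith [sq_abs (d : ℝ)])

theorem summable_mul_of_summable_sq_mul (hp : ∀ d, 0 ≤ p d)
    (h : Summable fun d : ℤ => (d : ℝ) ^ 2 * p d) : Summable fun d : ℤ => (d : ℝ) * p d :=
  h.of_norm_bounded_eventually <| (eventually_cofinite_ne 0).mono fun d hd => by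
    have : (1 : ℝ) ≤ |(d : ℝ)| := by exact_mod_cast Int.one_le_abs hd
    rw [norm_mul, Real.norm_eq_abs, Real.norm_of_nonneg (hp d)]
    exact mul_le_mul_of_nonneg_right (by nlinarith [sq_abs (d : ℝ)]) (hp d)

theorem HasSum.comp_sub_const {α : Type*} [AddCommMonoid α] [TopologicalSpace α] {f : ℤ → α}
    {s : α} (h : HasSum f s) (a : ℤ) :
    HasSum (fun d => f (d - a)) s :=
  (Equiv.subRight a).hasSum_iff.mpr h

theorem HasSum.mul_comp_sub_const (h₀ : HasSum p m₀) (h₁ : HasSum (fun d : ℤ => (d : ℝ) * p d) m₁)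
    (a : ℤ) : HasSum (fun d : ℤ => (d : ℝ) * p (d - a)) (m₁ + a * m₀) := by
  convert (h₁.add (h₀.mul_left (a : ℝ))).comp_sub_const a using 1
  ext d
  push_cast
  ring

theorem HasSum.sq_mul_comp_sub_const (h₀ : HasSum p m₀)
    (h₁ : HasSum (fun d : ℤ => (d : ℝ) * p d) m₁) (h₂ : HasSum (fun d : ℤ => (d : ℝ) ^ 2 * p d) m₂)
    (a : ℤ) : HasSum (fun d : ℤ => (d : ℝ) ^ 2 * p (d - a)) (m₂ + 2 * a * m₁ + a ^ 2 * m₀) := by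
  convert ((h₂.add (h₁.mul_left (2 * a : ℝ))).add (h₀.mul_left ((a : ℝ) ^ 2))).comp_sub_const a
    using 1
  ext d
  push_cast
  ring

end Moments

theorem eq_of_base_average {b : ℕ} (hb : 2 ≤ b) {x : ℕ → ℝ}
    (hx : ∀ q c, c < b → x (b * q + c) = (b - c) / b * x q + c / b * x (q + 1)) (r : ℕ) :
    x r = x 0 := by
  have hb' : (2 : ℝ) ≤ b := by exact_mod_cast hb
  induction r using Nat.strong_induction_on with
  | _ r ih =>
  obtain ⟨q, c, hc, rfl⟩ : ∃ q c, c < b ∧ r = b * q + c :=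
    ⟨r / b, r % b, Nat.mod_lt r (by omega), (Nat.div_add_mod r b).symm⟩
  rcases Nat.eq_zero_or_pos c with rfl | hc₀
  · rcases Nat.eq_zero_or_pos q with rfl | hq
    · rfl
    · rw [hx q 0 hc, ih q (by nlinarith)]
      field_simp
      ring
  · by_cases h1 : b * q + c = 1
    · obtain ⟨rfl, rfl⟩ : q = 0 ∧ c = 1 := by constructor <;> nlinarith
      have h := hx 0 1 hc
      simp only [mul_zero, zero_add, Nat.cast_one] at h ⊢
      field_simp at h
      nlinarith
    · have hq : q + 1 < b * q + c := by
        rcases Nat.eq_zero_or_pos q with rfl | hq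
        · omega
        · nlinarith
      rw [hx q c hc, ih q (by omega), ih (q + 1) hq]
      field_simp
      ring

theorem abs_le_of_base_recursion {b : ℕ} (hb : 2 ≤ b) {D : ℕ → ℝ}
    (hD : ∀ q c, c < b → D (b * q + c) = D q / b + (b - 2 * c - 1)) (r : ℕ) : |D r| ≤ b := by
  have hb' : (2 : ℝ) ≤ b := by exact_mod_cast hb
  induction r using Nat.strong_induction_on with
  | _ r ih =>
  obtain ⟨q, c, hc, rfl⟩ : ∃ q c, c < b ∧ r = b * q + c :=
    ⟨r / b, r % b, Nat.mod_lt r (by omega), (Nat.div_add_mod r b).symm⟩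
  rcases Nat.eq_zero_or_pos (b * q + c) with h | h
  · obtain ⟨rfl, rfl⟩ : q = 0 ∧ c = 0 := by constructor <;> nlinarith
    have h0 := hD 0 0 (by omega)
    simp only [mul_zero, add_zero, Nat.cast_zero] at h0
    have : D 0 = b := by
      field_simp at h0
      nlinarith
    simp [this]
  · have hc' : (c : ℝ) + 1 ≤ b := by exact_mod_cast hc
    have hq : |D q / b| ≤ 1 := by
      rw [abs_div, Nat.abs_cast, div_le_one (by positivity)]
      exact ih q (by nlinarith)
    have hshift : |(b : ℝ) - 2 * c - 1| ≤ b - 1 := by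
      rw [abs_le]; constructor <;> linarith [(Nat.cast_nonneg c : (0 : ℝ) ≤ c)]
    calc |D (b * q + c)| = |D q / b + (b - 2 * c - 1)| := by rw [hD q c hc]
      _ ≤ |D q / b| + |(b : ℝ) - 2 * c - 1| := abs_add_le _ _
      _ ≤ 1 + (b - 1) := add_le_add hq hshift
      _ = b := by ring

theorem abs_sub_le_of_base_recursion {b : ℕ} (hb : 2 ≤ b) {V : ℕ → ℝ}
    (hV : ∀ q c, c < b → V (b * q + c) = (b - c) / b * V q + c / b * V (q + 1) + c * (b - c))
    (r : ℕ) : |V (r + 1) - V r| ≤ b := by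
  have hb₀ : (b : ℝ) ≠ 0 := by positivity
  refine abs_le_of_base_recursion hb (D := fun r => V (r + 1) - V r) (fun q c hc => ?_) r
  rcases Nat.lt_or_ge (c + 1) b with hc1 | hc1
  · have := hV q (c + 1) hc1
    push_cast at this
    rw [add_assoc, this, hV q c hc]
    field_simp
    ring
  · obtain rfl : c = b - 1 := by omega
    have h := hV (q + 1) 0 (by omega)
    rw [show b * (q + 1) + 0 = b * q + (b - 1) + 1 by rw [Nat.mul_succ]; omega] at h
    rw [h, hV q (b - 1) hc, Nat.cast_sub (by omega)]
    push_cast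
    field_simp
    ring

def IsDeltaDensity (b : ℕ) (μ : ℕ → ℤ → ℝ) : Prop :=
  ∀ r d, Tendsto (fun N : ℕ => (deltaCount b r d N : ℝ) / N) atTop (𝓝 (μ r d))

namespace IsDeltaDensity

variable {b : ℕ} {μ : ℕ → ℤ → ℝ}

theorem nonneg (hμ : IsDeltaDensity b μ) (r : ℕ) (d : ℤ) : 0 ≤ μ r d :=
  ge_of_tendsto' (hμ r d) fun _ => by positivity

theorem apply_zero (hμ : IsDeltaDensity b μ) (d : ℤ) : μ 0 d = if d = 0 then 1 else 0 := by
  have hcount : ∀ N, deltaCount b 0 d N = if d = 0 then N else 0 := fun N => by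
    split_ifs with hd <;> simp [deltaCount, delta, hd, eq_comm]
  refine tendsto_nhds_unique (hμ 0 d) (tendsto_const_nhds.congr' ?_)
  filter_upwards [eventually_ne_atTop 0] with N hN
  rw [hcount]
  split_ifs <;> simp [hN]

theorem apply_base_mul_add (hμ : IsDeltaDensity b μ) (hb : 1 < b) {q c : ℕ} (hc : c < b)
    (d : ℤ) :
    μ (b * q + c) d = (b - c) / b * μ q (d - c) + c / b * μ (q + 1) (d - (c - b)) := by
  have hbM : Tendsto (b * ·) atTop atTop := tendsto_id.const_mul_atTop' (by omega)
  refine tendsto_nhds_unique ((hμ _ d).comp hbM) ?_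
  refine (((hμ q _).const_mul _).add ((hμ (q + 1) _).const_mul _)).congr fun M => ?_
  simp only [Function.comp_apply, deltaCount_base_mul hb hc, Nat.cast_add, Nat.cast_mul,
    Nat.cast_sub hc.le]
  rw [div_mul_div_comm, div_mul_div_comm, ← add_div]

theorem hasSum_base_mul_add (hμ : IsDeltaDensity b μ) (hb : 1 < b) {q c : ℕ} (hc : c < b)
    {s t : ℝ} (hs : HasSum (μ q) s) (ht : HasSum (μ (q + 1)) t) :
    HasSum (μ (b * q + c)) ((b - c) / b * s + c / b * t) :=
  (((hs.comp_sub_const c).mul_left _).add ((ht.comp_sub_const (c - b)).mul_left _)).congr_fun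
    (hμ.apply_base_mul_add hb hc)

theorem hasSum_mul_base_mul_add (hμ : IsDeltaDensity b μ) (hb : 1 < b) {q c : ℕ} (hc : c < b)
    {s₀ s₁ t₀ t₁ : ℝ} (hs₀ : HasSum (μ q) s₀) (hs₁ : HasSum (fun d : ℤ => (d : ℝ) * μ q d) s₁)
    (ht₀ : HasSum (μ (q + 1)) t₀) (ht₁ : HasSum (fun d : ℤ => (d : ℝ) * μ (q + 1) d) t₁) :
    HasSum (fun d : ℤ => (d : ℝ) * μ (b * q + c) d)
      ((b - c) / b * (s₁ + c * s₀) + c / b * (t₁ + (c - b) * t₀)) := by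
  have h := ((hs₀.mul_comp_sub_const hs₁ c).mul_left (((b : ℝ) - c) / b)).add
    ((ht₀.mul_comp_sub_const ht₁ (c - b)).mul_left ((c : ℝ) / b))
  push_cast at h
  refine h.congr_fun fun d => ?_
  rw [hμ.apply_base_mul_add hb hc]
  ring

theorem hasSum_sq_mul_base_mul_add (hμ : IsDeltaDensity b μ) (hb : 1 < b) {q c : ℕ} (hc : c < b)
    {s₀ s₁ s₂ t₀ t₁ t₂ : ℝ} (hs₀ : HasSum (μ q) s₀)
    (hs₁ : HasSum (fun d : ℤ => (d : ℝ) * μ q d) s₁)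
    (hs₂ : HasSum (fun d : ℤ => (d : ℝ) ^ 2 * μ q d) s₂) (ht₀ : HasSum (μ (q + 1)) t₀)
    (ht₁ : HasSum (fun d : ℤ => (d : ℝ) * μ (q + 1) d) t₁)
    (ht₂ : HasSum (fun d : ℤ => (d : ℝ) ^ 2 * μ (q + 1) d) t₂) :
    HasSum (fun d : ℤ => (d : ℝ) ^ 2 * μ (b * q + c) d)
      ((b - c) / b * (s₂ + 2 * c * s₁ + c ^ 2 * s₀) +
        c / b * (t₂ + 2 * (c - b) * t₁ + (c - b) ^ 2 * t₀)) := by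
  have h := ((hs₀.sq_mul_comp_sub_const hs₁ hs₂ c).mul_left (((b : ℝ) - c) / b)).add
    ((ht₀.sq_mul_comp_sub_const ht₁ ht₂ (c - b)).mul_left ((c : ℝ) / b))
  push_cast at h
  refine h.congr_fun fun d => ?_
  rw [hμ.apply_base_mul_add hb hc]
  ring

theorem hasSum_one (hμ : IsDeltaDensity b μ) (hb : 2 ≤ b)
    (h₂ : ∀ r, Summable fun d : ℤ => (d : ℝ) ^ 2 * μ r d) (r : ℕ) : HasSum (μ r) 1 := by
  have hsum r : Summable (μ r) := summable_of_summable_sq_mul (hμ.nonneg r) (h₂ r)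
  have hmass : ∑' d, μ r d = ∑' d, μ 0 d := eq_of_base_average hb (x := fun r => ∑' d, μ r d)
    (fun q c hc => (hμ.hasSum_base_mul_add hb hc (hsum q).hasSum (hsum (q + 1)).hasSum).tsum_eq) r
  rw [tsum_congr hμ.apply_zero, tsum_ite_eq] at hmass
  exact hmass ▸ (hsum r).hasSum

theorem hasSum_mul_zero (hμ : IsDeltaDensity b μ) (hb : 2 ≤ b)
    (h₂ : ∀ r, Summable fun d : ℤ => (d : ℝ) ^ 2 * μ r d) (r : ℕ) :
    HasSum (fun d : ℤ => (d : ℝ) * μ r d) 0 := by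
  have hsum r : Summable fun d : ℤ => (d : ℝ) * μ r d :=
    summable_mul_of_summable_sq_mul (hμ.nonneg r) (h₂ r)
  have hmean : ∑' d : ℤ, (d : ℝ) * μ r d = ∑' d : ℤ, (d : ℝ) * μ 0 d :=
    eq_of_base_average hb (x := fun r => ∑' d : ℤ, (d : ℝ) * μ r d) (fun q c hc => by
      rw [(hμ.hasSum_mul_base_mul_add hb hc (hμ.hasSum_one hb h₂ q) (hsum q).hasSum
        (hμ.hasSum_one hb h₂ (q + 1)) (hsum (q + 1)).hasSum).tsum_eq]
      ring) r
  have hzero (d : ℤ) : (d : ℝ) * μ 0 d = 0 := by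
    rw [hμ.apply_zero]
    split_ifs with h <;> simp [h]
  rw [tsum_congr hzero, tsum_zero] at hmean
  exact hmean ▸ (hsum r).hasSum

theorem variance_base_mul_add (hμ : IsDeltaDensity b μ) (hb : 2 ≤ b) {V : ℕ → ℝ}
    (hV : ∀ r, HasSum (fun d : ℤ => (d : ℝ) ^ 2 * μ r d) (V r)) {q c : ℕ} (hc : c < b) :
    V (b * q + c) = (b - c) / b * V q + c / b * V (q + 1) + c * (b - c) := by
  have h₂ r := (hV r).summable
  rw [(hV _).unique (hμ.hasSum_sq_mul_base_mul_add (by omega) hc (hμ.hasSum_one hb h₂ q)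
    (hμ.hasSum_mul_zero hb h₂ q) (hV q) (hμ.hasSum_one hb h₂ (q + 1))
    (hμ.hasSum_mul_zero hb h₂ (q + 1)) (hV (q + 1)))]
  have : (b : ℝ) ≠ 0 := by positivity
  field_simp
  ring

end IsDeltaDensity

theorem variance_difference_general (b : ℕ) (hb : 2 ≤ b)
    (μ : ℕ → ℤ → ℝ)
    (hμ : ∀ (r : ℕ) (d : ℤ),
      Tendsto (fun N : ℕ =>
        (((Finset.range N).filter fun n => delta b r n = d).card : ℝ) / N)
        atTop (𝓝 (μ r d)))
    (V : ℕ → ℝ)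
    (hV : ∀ r : ℕ, HasSum (fun d : ℤ => (d : ℝ) ^ 2 * μ r d) (V r))
    (r : ℕ) :
    |V (r + 1) - V r| ≤ (b : ℝ) :=
  abs_sub_le_of_base_recursion hb
    (fun _ _ hc => IsDeltaDensity.variance_base_mul_add hμ hb hV hc) r

/-- **Lemma.** For every integer `r ≥ 1`, `|Var(μ^(r+1)) - Var(μ^(r))| ≤ b`. -/
theorem variance_difference (b : ℕ) (hb : 2 ≤ b)
    (μ : ℕ → ℤ → ℝ)
    (hμ : ∀ (r : ℕ) (d : ℤ),
      Tendsto (fun N : ℕ =>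
        (((Finset.range N).filter fun n => delta b r n = d).card : ℝ) / N)
        atTop (𝓝 (μ r d)))
    (V : ℕ → ℝ)
    (hV : ∀ r : ℕ, HasSum (fun d : ℤ => (d : ℝ) ^ 2 * μ r d) (V r))
    (r : ℕ) (hr : 1 ≤ r) :
    |V (r + 1) - V r| ≤ (b : ℝ) :=
  variance_difference_general b hb μ hμ V hV r
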